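/- arXiv:1005.4254 — 4 statements merged into one kernel-verified Lean document; each statement's English description precedes it below -/
import Mathlib

section
/- Let S_[n] = K[x_1^{±1},…,x_n^{±1}], let K[Z] ⊆ S_[n] be a Stanley space with Z ⊆ {x_1,…,x_n} ∪ {x_1^{-1},…,x_n^{-1}} and {x_i, x_i^{-1}} ⊄ Z for all i, and set Z̄ = {x_i : x_i ∈ Z or x_i^{-1} ∈ Z}. Let v be a monomial of S_[n] such that supp_+(v) ∩ {i : x_i^{-1} ∈ Z} = ∅ and supp_-(v) ∩ {i : x_i ∈ Z} = ∅. Then the map u ↦ |u| induces, for each d ∈ ℕ, an isomorphism of K-vector spaces (vK[Z])_d ≅ (|v|K[Z̄])_d; in particular vK[Z] ≅ |v|K[Z̄]. -/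
/-!
Combinatorial model of the localized polynomial ring `S_f`, where
`S = K[x_1, …, x_n]`, `A ⊆ {1, …, n}` and `f = ∏_{j ∈ A} x_j`.

Since all the `ℤⁿ`-graded components of `S_f` are at most one-dimensional over `K`,
monomial `K`-subspaces of `S_f` (in particular monomial ideals, Stanley spaces and
modules `I/J`) are faithfully encoded by their sets of exponent vectors `a : Fin n → ℤ`,
direct sum decompositions into monomial subspaces correspond exactly to partitions of
the exponent sets, and (for those sets `Z` considered here) `u·K[Z]` is automatically a
free `K[Z]`-module.
-/

/-- Exponent vectors of the monomials of `S_f`: all `a : ℤⁿ` with `a j ≥ 0` for `j ∉ A`. -/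
def SfMon {n : ℕ} (A : Finset (Fin n)) : Set (Fin n → ℤ) :=
  {a | ∀ j, j ∉ A → 0 ≤ a j}

/-- `M` is the set of exponent vectors of the monomials of a monomial ideal of `S_f`
(for `A = ∅` this is a monomial ideal of the polynomial ring `S` itself). -/
def IsMonomialIdeal {n : ℕ} (A : Finset (Fin n)) (M : Set (Fin n → ℤ)) : Prop :=
  M ⊆ SfMon A ∧ ∀ a ∈ M, ∀ c ∈ SfMon A, a + c ∈ M

/-- Admissible sets of "variables" for Stanley spaces in `S_f`: `(i, true)` stands for
`x i` and `(i, false)` for `x i⁻¹`; inverse variables exist only for `i ∈ A`, and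
`{x i, x i⁻¹} ⊄ Z`. -/
def ZOk {n : ℕ} (A : Finset (Fin n)) (Z : Finset (Fin n × Bool)) : Prop :=
  (∀ i : Fin n, (i, false) ∈ Z → i ∈ A) ∧
  ∀ i : Fin n, ¬((i, true) ∈ Z ∧ (i, false) ∈ Z)

/-- Exponent vectors of the monomials of the Stanley space `u·K[Z]`. -/
def stanleySet {n : ℕ} (u : Fin n → ℤ) (Z : Finset (Fin n × Bool)) : Set (Fin n → ℤ) :=
  {a | ∀ i : Fin n, ((i, true) ∈ Z → u i ≤ a i) ∧ ((i, false) ∈ Z → a i ≤ u i) ∧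
      ((i, true) ∉ Z → (i, false) ∉ Z → a i = u i)}

/-- The family of Stanley spaces `u i · K[Z i]` is a Stanley decomposition of the
monomial `K`-vector space whose monomials have exponent vectors in `M`. -/
def IsStanleyDecompOn {n : ℕ} (A : Finset (Fin n)) (M : Set (Fin n → ℤ)) {ι : Type}
    (u : ι → Fin n → ℤ) (Z : ι → Finset (Fin n × Bool)) : Prop :=
  Finite ι ∧ (∀ i, ZOk A (Z i)) ∧
  Pairwise (fun i j : ι => Disjoint (stanleySet (u i) (Z i)) (stanleySet (u j) (Z j))) ∧
  (⋃ i, stanleySet (u i) (Z i)) = M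

/-- Stanley depth of the monomial `K`-space with exponent set `M` (value `⊤` for `M = ∅`). -/
noncomputable def sdepth {n : ℕ} (A : Finset (Fin n)) (M : Set (Fin n → ℤ)) : ℕ∞ :=
  sSup {k : ℕ∞ | ∃ (r : ℕ) (u : Fin r → Fin n → ℤ) (Z : Fin r → Finset (Fin n × Bool)),
    IsStanleyDecompOn A M u Z ∧ ∀ i, k ≤ ((Z i).card : ℕ∞)}

/-- The exponent vector of `f = ∏_{j ∈ A} x_j`. -/
def fVec {n : ℕ} (A : Finset (Fin n)) : Fin n → ℤ := fun i => if i ∈ A then 1 else 0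

/-- Localization at `f` of a monomial ideal (given by its set of exponent vectors). -/
def locSet {n : ℕ} (A : Finset (Fin n)) (M : Set (Fin n → ℤ)) : Set (Fin n → ℤ) :=
  {b ∈ SfMon A | ∃ k : ℕ, b + (k : ℤ) • fVec A ∈ M}

/-- `|a| = Σ_i |a_i|`, the degree used for the Hilbert series. -/
def degAbs {n : ℕ} (a : Fin n → ℤ) : ℕ := ∑ i, (a i).natAbs

/-- The Hilbert series `H_M(t) = Σ_d H(M,d) t^d`, `H(M,d) = #{a ∈ M : |a| = d}`, of the
`ℤⁿ`-graded `K`-vector space with monomial exponent set `M`. -/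
noncomputable def hilbSeries {n : ℕ} (M : Set (Fin n → ℤ)) : PowerSeries ℚ :=
  PowerSeries.mk fun d => (({a ∈ M | degAbs a = d}).ncard : ℚ)

/-- A prime filtration `J = N 0 ⊂ N 1 ⊂ … ⊂ N r = I` of `I/J` by monomial ideals of `S_f`,
with `i`-th factor isomorphic, as a `ℤⁿ`-graded module, to `(S_f/P_{B i})(-a i)`, where
`P_B` is the monomial prime ideal generated by the variables `x j`, `j ∈ B`. -/
def IsPrimeFiltration {n : ℕ} (A : Finset (Fin n)) (J I : Set (Fin n → ℤ)) (r : ℕ)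
    (N : Fin (r + 1) → Set (Fin n → ℤ)) (B : Fin r → Finset (Fin n))
    (a : Fin r → Fin n → ℤ) : Prop :=
  N 0 = J ∧ N (Fin.last r) = I ∧
  (∀ i : Fin (r + 1), IsMonomialIdeal A (N i)) ∧
  (∀ i : Fin r, N i.castSucc ⊂ N i.succ) ∧
  (∀ i : Fin r, ∀ j ∈ A, j ∉ B i) ∧
  (∀ i : Fin r, ∀ j, 0 ≤ a i j) ∧
  (∀ i : Fin r, ∀ j ∈ A, a i j = 0) ∧
  (∀ i : Fin r, N i.succ \ N i.castSucc =
    {b | ∃ c ∈ SfMon A, (∀ j ∈ B i, c j = 0) ∧ b = a i + c})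

/-- `fdepth` of `I/J` (value `⊤` for `I = J`); `dim S_f/P_B = n - |B|`. -/
noncomputable def fdepth {n : ℕ} (A : Finset (Fin n)) (J I : Set (Fin n → ℤ)) : ℕ∞ :=
  sSup {k : ℕ∞ | ∃ (r : ℕ) (N : Fin (r + 1) → Set (Fin n → ℤ)) (B : Fin r → Finset (Fin n))
      (a : Fin r → Fin n → ℤ), IsPrimeFiltration A J I r N B a ∧
      ∀ i, k ≤ ((n - (B i).card : ℕ) : ℕ∞)}

/-- The set of exponent vectors of the monomials of the colon ideal `(J :_{S_f} I)`,
which is the annihilator of `I/J`. -/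
def colonSet {n : ℕ} (A : Finset (Fin n)) (I J : Set (Fin n → ℤ)) : Set (Fin n → ℤ) :=
  {c ∈ SfMon A | ∀ a ∈ I, a + c ∈ J}

/-- The monomial prime `P_B·S_f` contains the monomial ideal with exponent set `Q`. -/
def primeContainsIdeal {n : ℕ} (B : Finset (Fin n)) (Q : Set (Fin n → ℤ)) : Prop :=
  ∀ c ∈ Q, ∃ j ∈ B, 1 ≤ c j

/-- `P_B·S_f` is a minimal prime ideal of the module `I/J`, i.e. a prime of `S_f`
(so `B ∩ A = ∅`) minimal among those containing `ann(I/J) = (J : I)`. -/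
def IsMinimalPrimeOf {n : ℕ} (A B : Finset (Fin n)) (I J : Set (Fin n → ℤ)) : Prop :=
  (∀ j ∈ A, j ∉ B) ∧ primeContainsIdeal B (colonSet A I J) ∧
  ∀ B' ⊆ B, primeContainsIdeal B' (colonSet A I J) → B' = B

/-- `|·|` applied coordinatewise to an exponent vector. -/
def absVec {n : ℕ} (a : Fin n → ℤ) : Fin n → ℤ := fun i => |a i|

/-- In `S_[n] = K[x_1^{±1}, …, x_n^{±1}]` (localizing set `A = univ`), let `K[Z]` be a
Stanley space with `{x_i, x_i⁻¹} ⊄ Z` for all `i`, and `Z̄ = {x_i : x_i ∈ Z or x_i⁻¹ ∈ Z}`.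
If `v` is a monomial with `supp₊(v) ∩ {i : x_i⁻¹ ∈ Z} = ∅` and
`supp₋(v) ∩ {i : x_i ∈ Z} = ∅`, then the map `u ↦ |u|` preserves the degree `|·|`,
maps `vK[Z]` bijectively onto `|v|K[Z̄]`, and induces for each `d ∈ ℕ` an isomorphism
(a degree-preserving bijection of monomial bases) `(vK[Z])_d ≅ (|v|K[Z̄])_d`. -/
theorem abs_bijection_stanley_space {n : ℕ} (Z : Finset (Fin n × Bool))
    (hZ : ∀ i : Fin n, ¬((i, true) ∈ Z ∧ (i, false) ∈ Z))
    (v : Fin n → ℤ)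
    (h1 : ∀ i : Fin n, 0 < v i → (i, false) ∉ Z)
    (h2 : ∀ i : Fin n, v i < 0 → (i, true) ∉ Z) :
    (∀ a ∈ stanleySet v Z, degAbs (absVec a) = degAbs a) ∧
    Set.BijOn absVec (stanleySet v Z)
      (stanleySet (absVec v) (Z.image fun p => (p.1, true))) ∧
    ∀ d : ℕ, Set.BijOn absVec {a ∈ stanleySet v Z | degAbs a = d}
      {a ∈ stanleySet (absVec v) (Z.image fun p => (p.1, true)) | degAbs a = d} := by
  classical
  set Z' := Z.image fun p : Fin n × Bool => (p.1, true) with hZ'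
  have hmemT : ∀ i : Fin n, ((i, true) ∈ Z' ↔ ((i, true) ∈ Z ∨ (i, false) ∈ Z)) := by
    intro i
    simp only [hZ', Finset.mem_image, Prod.mk.injEq]
    constructor
    · rintro ⟨⟨j, b⟩, h, rfl, -⟩
      cases b
      · right; exact h
      · left; exact h
    · rintro (h | h)
      exacts [⟨(i, true), h, rfl, trivial⟩, ⟨(i, false), h, rfl, trivial⟩]
  have hmemF : ∀ i : Fin n, (i, false) ∉ Z' := by
    intro i
    simp [hZ', Finset.mem_image]
  -- the inverse map
  set g : (Fin n → ℤ) → (Fin n → ℤ) := fun b i =>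
    if (i, true) ∈ Z then b i else if (i, false) ∈ Z then -b i else v i with hg
  have deg1 : ∀ a ∈ stanleySet v Z, degAbs (absVec a) = degAbs a := by
    intro a _
    unfold degAbs absVec
    simp [Int.natAbs_abs]
  have mapsTo : ∀ a ∈ stanleySet v Z, absVec a ∈ stanleySet (absVec v) Z' := by
    intro a ha i
    obtain ⟨c1, c2, c3⟩ := ha i
    refine ⟨?_, fun h => absurd h (hmemF i), ?_⟩
    · intro h
      rcases (hmemT i).1 h with ht | hf
      · have hv : 0 ≤ v i := by
          by_contra hlt
          exact h2 i (by omega) ht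
        have := c1 ht
        unfold absVec
        rw [abs_of_nonneg hv, abs_of_nonneg (le_trans hv this)]
        exact this
      · have hv : v i ≤ 0 := by
          by_contra hlt
          exact h1 i (by omega) hf
        have := c2 hf
        unfold absVec
        rw [abs_of_nonpos hv, abs_of_nonpos (le_trans this hv)]
        omega
    · intro hT _
      have hnt : (i, true) ∉ Z := fun h => hT ((hmemT i).2 (Or.inl h))
      have hnf : (i, false) ∉ Z := fun h => hT ((hmemT i).2 (Or.inr h))
      unfold absVec
      rw [c3 hnt hnf]
  have left_inv : ∀ a ∈ stanleySet v Z, g (absVec a) = a := by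
    intro a ha
    funext i
    obtain ⟨c1, c2, c3⟩ := ha i
    simp only [hg, absVec]
    by_cases ht : (i, true) ∈ Z
    · have hv : 0 ≤ v i := by
        by_contra hlt
        exact h2 i (by omega) ht
      rw [if_pos ht, abs_of_nonneg (le_trans hv (c1 ht))]
    · rw [if_neg ht]
      by_cases hf : (i, false) ∈ Z
      · have hv : v i ≤ 0 := by
          by_contra hlt
          exact h1 i (by omega) hf
        rw [if_pos hf, abs_of_nonpos (le_trans (c2 hf) hv)]
        ring
      · rw [if_neg hf, c3 ht hf]
  have g_mem : ∀ b ∈ stanleySet (absVec v) Z', g b ∈ stanleySet v Z := by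
    intro b hb i
    obtain ⟨c1, c2, c3⟩ := hb i
    refine ⟨?_, ?_, ?_⟩
    · intro ht
      have hv : 0 ≤ v i := by
        by_contra hlt
        exact h2 i (by omega) ht
      have := c1 ((hmemT i).2 (Or.inl ht))
      simp only [hg, if_pos ht]
      unfold absVec at this
      rw [abs_of_nonneg hv] at this
      exact this
    · intro hf
      have hv : v i ≤ 0 := by
        by_contra hlt
        exact h1 i (by omega) hf
      have hnt : (i, true) ∉ Z := fun h => hZ i ⟨h, hf⟩
      have := c1 ((hmemT i).2 (Or.inr hf))
      simp only [hg, if_neg hnt, if_pos hf]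
      unfold absVec at this
      rw [abs_of_nonpos hv] at this
      omega
    · intro hnt hnf
      simp [hg, if_neg hnt, if_neg hnf]
  have right_inv : ∀ b ∈ stanleySet (absVec v) Z', absVec (g b) = b := by
    intro b hb
    funext i
    obtain ⟨c1, c2, c3⟩ := hb i
    simp only [hg, absVec]
    by_cases ht : (i, true) ∈ Z
    · have := c1 ((hmemT i).2 (Or.inl ht))
      have hb0 : 0 ≤ b i := le_trans (abs_nonneg _) this
      rw [if_pos ht, abs_of_nonneg hb0]
    · rw [if_neg ht]
      by_cases hf : (i, false) ∈ Z
      · have := c1 ((hmemT i).2 (Or.inr hf))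
        have hb0 : 0 ≤ b i := le_trans (abs_nonneg _) this
        rw [if_pos hf, abs_neg, abs_of_nonneg hb0]
      · have hT : (i, true) ∉ Z' := by
          intro h
          rcases (hmemT i).1 h with h | h
          exacts [ht h, hf h]
        rw [if_neg hf, c3 hT (hmemF i)]
        rfl
  have bij : Set.BijOn absVec (stanleySet v Z) (stanleySet (absVec v) Z') := by
    refine ⟨mapsTo, ?_, ?_⟩
    · intro a ha a' ha' h
      rw [← left_inv a ha, ← left_inv a' ha', h]
    · intro b hb
      exact ⟨g b, g_mem b hb, right_inv b hb⟩
  refine ⟨deg1, bij, ?_⟩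
  intro d
  refine ⟨?_, ?_, ?_⟩
  · rintro a ⟨ha, hd⟩
    exact ⟨mapsTo a ha, by rw [deg1 a ha]; exact hd⟩
  · exact bij.injOn.mono (Set.sep_subset _ _)
  · rintro b ⟨hb, hd⟩
    refine ⟨g b, ⟨g_mem b hb, ?_⟩, right_inv b hb⟩
    rw [← deg1 (g b) (g_mem b hb), right_inv b hb]
    exact hd
end

section
/- Let A ⊆ {1,…,n}, f = ∏_{i∈A} x_i, and P a monomial prime ideal of S_f with f ∉ P. Then for any a ∈ ℕ^n with a(j) = 0 for j ∈ A, the Hilbert series of the shifted module satisfies H_{(S_f/P)(-a)}(t) = Q(t)·(1+t)^{|A|}/(1-t)^{d'} where d' = dim S_f/P and Q(t) is a polynomial with Q(1) = 1. Consequently, if J ⊂ I ⊂ S_f are monomial ideals, then H_{I/J}(t) = Q̃(t)/(1-t)^d with d = dim I/J and Q̃(1) = k·2^{|A|}, where k is the number of factors (S_f/P_i)(-a_i) with dim S_f/P_i = d in a prime filtration of I/J as above. -/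
/-!
The monomials of `(S_f/P_B)(-a)` form a box `∏ᵢ Sᵢ ⊆ ℤⁿ`, with `Sᵢ = {aᵢ}` for `i ∈ B`, `Sᵢ = ℤ`
for `i ∈ A` and `Sᵢ = [aᵢ, ∞)` otherwise. Since `|·|` is additive over the coordinates, the
Hilbert series of a box is the product of the one-variable series `t^aᵢ`, `(1 + t)/(1 - t)` and
`t^aᵢ/(1 - t)`, whence `H = t^|a| (1 + t)^|A| / (1 - t)^(n - |B|)`.

The factors of a prime filtration of `I/J` partition `I \ J`, so `H_{I/J}` is the sum of their
series. Each `P_{B_i}` contains `ann(I/J) = (J : I)`, hence a minimal prime of `I/J`, so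
`n - |B_i| ≤ d`; after multiplying by `(1 - t)^d`, only the factors with `n - |B_i| = d` survive
at `t = 1`, each contributing `2^|A|`.
-/

open Function PowerSeries

noncomputable def degSeries {α : Type*} (deg : α → ℕ) (s : Set α) : PowerSeries ℚ :=
  mk fun d => ({x ∈ s | deg x = d}.ncard : ℚ)

section degSeries

open Finset

variable {α β ι : Type*}

theorem degSeries_iUnion [Fintype ι] {deg : α → ℕ} (hdeg : ∀ d, {x | deg x = d}.Finite)
    {s : ι → Set α} (hs : Pairwise (Disjoint on s)) :
    degSeries deg (⋃ i, s i) = ∑ i, degSeries deg (s i) := by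
  ext d
  have hslice : {x ∈ ⋃ i, s i | deg x = d} = ⋃ i, {x ∈ s i | deg x = d} := by
    ext; simp
  simp only [degSeries, coeff_mk, map_sum, ← Nat.cast_sum, hslice]
  rw [Set.ncard_iUnion_of_finite (s := fun i => {x ∈ s i | deg x = d})
    (fun i => (hdeg d).subset fun _ hx => hx.2)
    (fun i j hij => (hs hij).mono (Set.sep_subset _ _) (Set.sep_subset _ _)),
    finsum_eq_sum_of_fintype]

theorem degSeries_prod {f : α → ℕ} {g : β → ℕ} (hf : ∀ d, {x | f x = d}.Finite)
    (hg : ∀ d, {y | g y = d}.Finite) (s : Set α) (t : Set β) :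
    degSeries (fun p => f p.1 + g p.2) (s ×ˢ t) = degSeries f s * degSeries g t := by
  ext d
  have hsplit : {p ∈ s ×ˢ t | f p.1 + g p.2 = d} =
      ⋃ q ∈ (antidiagonal d : Set (ℕ × ℕ)), {x ∈ s | f x = q.1} ×ˢ {y ∈ t | g y = q.2} := by
    ext ⟨x, y⟩
    simp only [Set.mem_iUnion₂, mem_coe, HasAntidiagonal.mem_antidiagonal]
    constructor
    · rintro ⟨⟨hx, hy⟩, rfl⟩
      exact ⟨(f x, g y), rfl, ⟨hx, rfl⟩, hy, rfl⟩
    · rintro ⟨q, rfl, ⟨hx, hfx⟩, hy, hgy⟩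
      exact ⟨⟨hx, hy⟩, by rw [← hfx, ← hgy]⟩
  have hdisj : (antidiagonal d : Set (ℕ × ℕ)).PairwiseDisjoint
      fun q => {x ∈ s | f x = q.1} ×ˢ {y ∈ t | g y = q.2} := by
    intro q _ q' _ hqq'
    refine Set.disjoint_left.2 fun p hp hp' => hqq' ?_
    exact Prod.ext (hp.1.2.symm.trans hp'.1.2) (hp.2.2.symm.trans hp'.2.2)
  simp only [degSeries, coeff_mul, coeff_mk, ← Nat.cast_mul, ← Nat.cast_sum, ← Set.ncard_prod]
  rw [hsplit, (antidiagonal d).finite_toSet.ncard_biUnion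
    (fun q _ => ((hf q.1).subset fun _ hx => hx.2).prod ((hg q.2).subset fun _ hy => hy.2)) hdisj,
    finsum_mem_coe_finset]

theorem degSeries_comp_equiv (e : α ≃ β) (deg : β → ℕ) (s : Set β) :
    degSeries (deg ∘ e) (e ⁻¹' s) = degSeries deg s := by
  ext d
  simp only [degSeries, coeff_mk]
  exact congrArg _ (Set.ncard_preimage_of_injective_subset_range (s := {y ∈ s | deg y = d})
    e.injective (by simp))

end degSeries

section hilbSeries

theorem finite_natAbs_eq (d : ℕ) : {x : ℤ | x.natAbs = d}.Finite :=
  (Set.toFinite {(d : ℤ), -(d : ℤ)}).subset fun _ hx => by simpa using Int.natAbs_eq_iff.1 hx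

theorem finite_degAbs_eq {n : ℕ} (d : ℕ) : {a : Fin n → ℤ | degAbs a = d}.Finite := by
  refine (Set.Finite.pi fun _ => Set.finite_Icc (-(d : ℤ)) d).subset fun a ha i _ => ?_
  have : (a i).natAbs ≤ d :=
    ha ▸ Finset.single_le_sum (f := fun j => (a j).natAbs) (fun _ _ => Nat.zero_le _)
      (Finset.mem_univ i)
  simp only [Set.mem_Icc]
  omega

theorem degAbs_cons {n : ℕ} (x : ℤ) (a : Fin n → ℤ) :
    degAbs (Fin.cons x a : Fin (n + 1) → ℤ) = x.natAbs + degAbs a := by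
  simp [degAbs, Fin.sum_univ_succ]

theorem hilbSeries_iUnion {n : ℕ} {ι : Type*} [Fintype ι] {s : ι → Set (Fin n → ℤ)}
    (hs : Pairwise (Disjoint on s)) : hilbSeries (⋃ i, s i) = ∑ i, hilbSeries (s i) :=
  degSeries_iUnion finite_degAbs_eq hs

theorem hilbSeries_univ_pi {n : ℕ} (S : Fin n → Set ℤ) :
    hilbSeries (Set.univ.pi S) = ∏ i, degSeries Int.natAbs (S i) := by
  induction n with
  | zero =>
    ext d
    have hdeg (a : Fin 0 → ℤ) : degAbs a = 0 := by simp [degAbs]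
    rcases d with _ | d <;> simp [hilbSeries, hdeg, coeff_one, Set.ncard_univ]
  | succ n ih =>
    set e := Fin.consEquiv fun _ : Fin (n + 1) => ℤ
    have hpi : e ⁻¹' Set.univ.pi S = S 0 ×ˢ Set.univ.pi fun i => S i.succ := by
      ext ⟨x, a⟩
      simp [e, Fin.forall_fin_succ]
    have hdeg : degAbs ∘ e = fun p => p.1.natAbs + degAbs p.2 := by
      ext ⟨x, a⟩
      exact degAbs_cons x a
    calc hilbSeries (Set.univ.pi S) = degSeries (degAbs ∘ e) (e ⁻¹' Set.univ.pi S) :=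
          (degSeries_comp_equiv e _ _).symm
      _ = degSeries Int.natAbs (S 0) * hilbSeries (Set.univ.pi fun i => S i.succ) := by
          rw [hdeg, hpi, degSeries_prod finite_natAbs_eq finite_degAbs_eq]; rfl
      _ = ∏ i, degSeries Int.natAbs (S i) := by rw [ih, Fin.prod_univ_succ]

theorem degSeries_natAbs_singleton (m : ℕ) : degSeries Int.natAbs {(m : ℤ)} = X ^ m := by
  ext d
  have hslice : {x ∈ ({(m : ℤ)} : Set ℤ) | x.natAbs = d} = if d = m then {(m : ℤ)} else ∅ := by
    ext x; split_ifs <;> simp <;> omega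
  rw [degSeries, coeff_mk, coeff_X_pow, hslice]
  split_ifs <;> simp

theorem degSeries_natAbs_Ici (m : ℕ) :
    degSeries Int.natAbs (Set.Ici (m : ℤ)) = X ^ m * mk 1 := by
  ext d
  have hslice : {x ∈ Set.Ici (m : ℤ) | x.natAbs = d} = if m ≤ d then {(d : ℤ)} else ∅ := by
    ext x; split_ifs <;> simp <;> omega
  rw [degSeries, coeff_mk, coeff_X_pow_mul', hslice]
  split_ifs <;> simp

theorem degSeries_natAbs_univ : degSeries Int.natAbs Set.univ = (1 + X) * mk 1 := by
  ext d
  have hslice : {x ∈ (Set.univ : Set ℤ) | x.natAbs = d} = {(d : ℤ), -(d : ℤ)} := by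
    ext x; simp [Int.natAbs_eq_iff]
  rw [degSeries, coeff_mk, hslice, add_mul, one_mul, map_add]
  rcases d with _ | d
  · simp
  · rw [coeff_succ_X_mul, Set.ncard_pair (by omega)]
    norm_num

end hilbSeries

/-- The exponent set of `(S_f/P_B)(-a)`, where `P_B` is generated by the `x j` with `j ∈ B`. -/
def shiftedQuotient {n : ℕ} (A B : Finset (Fin n)) (a : Fin n → ℤ) : Set (Fin n → ℤ) :=
  {b | ∃ c ∈ SfMon A, (∀ j ∈ B, c j = 0) ∧ b = a + c}

section shiftedQuotient

variable {n : ℕ} {A B : Finset (Fin n)} {a : Fin n → ℤ}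

theorem shiftedQuotient_eq_univ_pi :
    shiftedQuotient A B a = Set.univ.pi fun i =>
      if i ∈ B then {a i} else if i ∈ A then Set.univ else Set.Ici (a i) := by
  ext b
  constructor
  · rintro ⟨c, hc, hcB, rfl⟩ i -
    have := hc i
    dsimp only
    split_ifs <;> simp_all
  · intro hb
    refine ⟨b - a, fun j hj => ?_, fun j hj => ?_, by abel⟩ <;> have := hb j trivial
    · dsimp only at this
      split_ifs at this <;> simp_all
    · simp_all

theorem hilbSeries_shiftedQuotient_mul (hAB : Disjoint A B) (ha : ∀ j, 0 ≤ a j)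
    (haA : ∀ j ∈ A, a j = 0) :
    hilbSeries (shiftedQuotient A B a) * (1 - X) ^ (n - B.card) =
      X ^ degAbs a * (1 + X) ^ A.card := by
  have hfactor (i : Fin n) :
      degSeries Int.natAbs (if i ∈ B then {a i} else if i ∈ A then Set.univ else Set.Ici (a i)) *
          (if i ∈ B then 1 else 1 - X) =
        X ^ (a i).natAbs * if i ∈ A then 1 + X else 1 := by
    obtain ⟨m, hm⟩ := Int.eq_ofNat_of_zero_le (ha i)
    by_cases hB : i ∈ B
    · rw [if_pos hB, if_pos hB, if_neg (Finset.disjoint_right.1 hAB hB), hm,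
        degSeries_natAbs_singleton, mul_one, mul_one, Int.natAbs_natCast]
    by_cases hA : i ∈ A <;> simp only [hB, hA, if_true, if_false]
    · rw [haA i hA, degSeries_natAbs_univ, mul_assoc, mk_one_mul_one_sub_eq_one]
      simp
    · rw [hm, degSeries_natAbs_Ici, mul_assoc, mk_one_mul_one_sub_eq_one, Int.natAbs_natCast]
  have hpow : (1 - X : PowerSeries ℚ) ^ (n - B.card) = ∏ i, if i ∈ B then 1 else 1 - X := by
    simp [Finset.prod_ite, Finset.filter_not, Finset.card_sdiff]
  rw [shiftedQuotient_eq_univ_pi, hilbSeries_univ_pi, hpow, ← Finset.prod_mul_distrib,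
    Finset.prod_congr rfl fun i _ => hfactor i, Finset.prod_mul_distrib,
    Finset.prod_pow_eq_pow_sum, Finset.prod_ite_mem, Finset.univ_inter, Finset.prod_const]
  rfl

end shiftedQuotient

section filtration

variable {α : Type*} {r : ℕ} {N : Fin (r + 1) → Set α}

theorem Monotone.last_diff_zero_eq_iUnion (hN : Monotone N) :
    N (Fin.last r) \ N 0 = ⋃ i : Fin r, N i.succ \ N i.castSucc := by
  refine subset_antisymm ?_ (Set.iUnion_subset fun i =>
    Set.sdiff_subset_sdiff (hN (Fin.le_last _)) (hN (Fin.zero_le _)))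
  suffices ∀ k, N k \ N 0 ⊆ ⋃ i : Fin r, N i.succ \ N i.castSucc from this _
  intro k
  induction k using Fin.induction with
  | zero => simp
  | succ i ih =>
    intro b ⟨hb, hb0⟩
    by_cases hbi : b ∈ N i.castSucc
    · exact ih ⟨hbi, hb0⟩
    · exact Set.mem_iUnion.2 ⟨i, hb, hbi⟩

theorem Monotone.pairwise_disjoint_succ_diff_castSucc (hN : Monotone N) :
    Pairwise (Disjoint on fun i : Fin r => N i.succ \ N i.castSucc) := by
  suffices ∀ i j : Fin r, i < j → Disjoint (N i.succ \ N i.castSucc) (N j.succ \ N j.castSucc)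
    from fun i j hij => hij.lt_or_gt.elim (this i j) fun h => (this j i h).symm
  intro i j hij
  exact Set.disjoint_of_subset_left
    (Set.sdiff_subset.trans (hN (Fin.succ_le_castSucc_iff.2 hij))) Set.disjoint_sdiff_right

end filtration

theorem exists_isMinimalPrimeOf_subset {n : ℕ} {A B : Finset (Fin n)} {I J : Set (Fin n → ℤ)}
    (hAB : ∀ j ∈ A, j ∉ B) (hB : primeContainsIdeal B (colonSet A I J)) :
    ∃ B' ⊆ B, IsMinimalPrimeOf A B' I J := by
  obtain ⟨B', hB'B, hmin⟩ := exists_minimal_le_of_wellFoundedLT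
    (fun B' => primeContainsIdeal B' (colonSet A I J)) B hB
  exact ⟨B', hB'B, fun j hj hjB' => hAB j hj (hB'B hjB'), hmin.prop,
    fun B'' hB'' h => le_antisymm hB'' (hmin.2 h hB'')⟩

/-- `dim I/J`, the largest `dim S_f/P_B = n - |B|` over the minimal primes `P_B` of `I/J`. -/
noncomputable def quotDim {n : ℕ} (A : Finset (Fin n)) (I J : Set (Fin n → ℤ)) : ℕ :=
  sSup {m : ℕ | ∃ B : Finset (Fin n), IsMinimalPrimeOf A B I J ∧ m = n - B.card}

namespace IsPrimeFiltration

variable {n r : ℕ} {A : Finset (Fin n)} {I J : Set (Fin n → ℤ)}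
  {N : Fin (r + 1) → Set (Fin n → ℤ)} {B : Fin r → Finset (Fin n)} {a : Fin r → Fin n → ℤ}

theorem monotone (hF : IsPrimeFiltration A J I r N B a) : Monotone N := by
  obtain ⟨-, -, -, hssub, -⟩ := hF
  exact Fin.monotone_iff_le_succ.2 fun i => (hssub i).subset

theorem diff_eq_iUnion (hF : IsPrimeFiltration A J I r N B a) :
    I \ J = ⋃ i, shiftedQuotient A (B i) (a i) := by
  have hN := hF.monotone
  obtain ⟨rfl, rfl, -, -, -, -, -, hfactor⟩ := hF
  rw [hN.last_diff_zero_eq_iUnion]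
  exact Set.iUnion_congr hfactor

theorem pairwise_disjoint (hF : IsPrimeFiltration A J I r N B a) :
    Pairwise (Disjoint on fun i => shiftedQuotient A (B i) (a i)) := by
  have hN := hF.monotone
  obtain ⟨-, -, -, -, -, -, -, hfactor⟩ := hF
  rw [show (fun i => shiftedQuotient A (B i) (a i)) = fun i => N i.succ \ N i.castSucc from
    funext fun i => (hfactor i).symm]
  exact hN.pairwise_disjoint_succ_diff_castSucc

theorem hilbSeries_factor_mul (hF : IsPrimeFiltration A J I r N B a) (i : Fin r) :
    hilbSeries (shiftedQuotient A (B i) (a i)) * (1 - X) ^ (n - (B i).card) =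
      X ^ degAbs (a i) * (1 + X) ^ A.card := by
  obtain ⟨-, -, -, -, hAB, ha, haA, -⟩ := hF
  exact hilbSeries_shiftedQuotient_mul (Finset.disjoint_left.2 (hAB i)) (ha i) (haA i)

theorem primeContainsIdeal_colonSet (hF : IsPrimeFiltration A J I r N B a) (i : Fin r) :
    primeContainsIdeal (B i) (colonSet A I J) := by
  have hN := hF.monotone
  obtain ⟨rfl, rfl, -, -, hAB, -, -, hfactor⟩ := hF
  intro c hc
  by_contra! hlt
  -- Otherwise `a i + c` lies in the `i`-th factor, hence outside `J`, although `a i ∈ I`.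
  have hcB : ∀ j ∈ B i, c j = 0 := fun j hj =>
    le_antisymm (Int.lt_add_one_iff.1 (hlt j hj)) (hc.1 j fun hjA => hAB i j hjA hj)
  have hai : a i ∈ N i.succ \ N i.castSucc := by
    rw [hfactor]
    exact ⟨0, fun _ _ => le_rfl, fun _ _ => rfl, (add_zero _).symm⟩
  have hac : a i + c ∈ N i.succ \ N i.castSucc := by
    rw [hfactor]
    exact ⟨c, hc.1, hcB, rfl⟩
  exact hac.2 (hN (Fin.zero_le _) (hc.2 _ (hN (Fin.le_last _) hai.1)))

theorem sub_card_le_quotDim (hF : IsPrimeFiltration A J I r N B a) (i : Fin r) :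
    n - (B i).card ≤ quotDim A I J := by
  have hcolon := hF.primeContainsIdeal_colonSet i
  obtain ⟨-, -, -, -, hAB, -⟩ := hF
  obtain ⟨B', hB'B, hB'⟩ := exists_isMinimalPrimeOf_subset (hAB i) hcolon
  calc n - (B i).card ≤ n - B'.card := Nat.sub_le_sub_left (Finset.card_le_card hB'B) n
    _ ≤ quotDim A I J :=
      le_csSup ⟨n, by rintro m ⟨_, -, rfl⟩; exact Nat.sub_le _ _⟩ ⟨B', hB', rfl⟩

end IsPrimeFiltration

theorem exists_polynomial_sum_mul_one_sub_pow {R ι : Type*} [CommRing R] (s : Finset ι)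
    (H : ι → PowerSeries R) (P : ι → Polynomial R) (e : ι → ℕ) {d : ℕ}
    (he : ∀ i ∈ s, e i ≤ d) (hH : ∀ i ∈ s, H i * (1 - X) ^ e i = (P i : PowerSeries R)) :
    ∃ Q : Polynomial R, (∑ i ∈ s, H i) * (1 - X) ^ d = (Q : PowerSeries R) ∧
      Q.eval 1 = ∑ i ∈ s with e i = d, (P i).eval 1 := by
  refine ⟨∑ i ∈ s, P i * (1 - Polynomial.X) ^ (d - e i), ?_, ?_⟩
  · rw [Finset.sum_mul, ← Polynomial.coeToPowerSeries.ringHom_apply, map_sum]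
    refine Finset.sum_congr rfl fun i hi => ?_
    rw [Polynomial.coeToPowerSeries.ringHom_apply]
    push_cast
    rw [← hH i hi, mul_assoc, ← pow_add, Nat.add_sub_cancel' (he i hi)]
  · simp only [Polynomial.eval_finsetSum, Polynomial.eval_mul, Polynomial.eval_pow,
      Polynomial.eval_sub, Polynomial.eval_one, Polynomial.eval_X, sub_self, zero_pow_eq,
      mul_ite, mul_one, mul_zero, Finset.sum_ite, Finset.sum_const_zero, add_zero]
    exact Finset.sum_congr (Finset.filter_congr fun i hi => by have := he i hi; omega)
      fun _ _ => rfl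

/-- (1) For a monomial prime `P = P_B·S_f` of `S_f` with `f ∉ P` (i.e. `B ∩ A = ∅`) and a
shift `a ∈ ℕⁿ` with `a j = 0` for `j ∈ A`, the Hilbert series of `(S_f/P)(-a)` satisfies
`H(t) = Q(t)(1+t)^{|A|}/(1-t)^{d'}` with `d' = dim S_f/P = n - |B|` and `Q(1) = 1`.
(2) Consequently, for monomial ideals `J ⊂ I ⊂ S_f` and any prime filtration of `I/J` as
above, `H_{I/J}(t) = Q̃(t)/(1-t)^d` with `d = dim I/J` (the maximum of `dim S_f/P'` over
the minimal primes `P'` of `I/J`) and `Q̃(1) = k·2^{|A|}`, where `k` is the number of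
filtration factors `(S_f/P_i)(-a_i)` with `dim S_f/P_i = d`. -/
theorem hilbert_series_prime_filtration {n : ℕ} (A : Finset (Fin n)) :
    (∀ B : Finset (Fin n), (∀ j ∈ A, j ∉ B) →
      ∀ a : Fin n → ℤ, (∀ j, 0 ≤ a j) → (∀ j ∈ A, a j = 0) →
      ∃ Q : Polynomial ℚ,
        hilbSeries {b | ∃ c ∈ SfMon A, (∀ j ∈ B, c j = 0) ∧ b = a + c} *
            (1 - PowerSeries.X) ^ (n - B.card) =
          (Q : PowerSeries ℚ) * (1 + PowerSeries.X) ^ A.card ∧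
        Q.eval 1 = 1) ∧
    ∀ I J : Set (Fin n → ℤ), IsMonomialIdeal A I → IsMonomialIdeal A J → J ⊂ I →
      ∀ (r : ℕ) (N : Fin (r + 1) → Set (Fin n → ℤ)) (B : Fin r → Finset (Fin n))
        (a : Fin r → Fin n → ℤ), IsPrimeFiltration A J I r N B a →
        ∀ d : ℕ,
          d = sSup {m : ℕ | ∃ B' : Finset (Fin n),
              IsMinimalPrimeOf A B' I J ∧ m = n - B'.card} →
          ∃ Q : Polynomial ℚ,
            hilbSeries (I \ J) * (1 - PowerSeries.X) ^ d = (Q : PowerSeries ℚ) ∧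
            Q.eval 1 =
              ((Finset.univ.filter fun i : Fin r => n - (B i).card = d).card : ℚ) *
                2 ^ A.card := by
  refine ⟨fun B hAB a ha haA => ⟨Polynomial.X ^ degAbs a, ?_, by simp⟩, ?_⟩
  · push_cast
    exact hilbSeries_shiftedQuotient_mul (Finset.disjoint_left.2 hAB) ha haA
  · rintro I J - - - r N B a hF d (rfl : d = quotDim A I J)
    obtain ⟨Q, hQ, hQ1⟩ := exists_polynomial_sum_mul_one_sub_pow Finset.univ
      (fun i => hilbSeries (shiftedQuotient A (B i) (a i)))
      (fun i => Polynomial.X ^ degAbs (a i) * (1 + Polynomial.X) ^ A.card)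
      (fun i => n - (B i).card) (fun i _ => hF.sub_card_le_quotDim i)
      fun i _ => by push_cast; exact hF.hilbSeries_factor_mul i
    refine ⟨Q, ?_, ?_⟩
    · rwa [hF.diff_eq_iUnion, hilbSeries_iUnion hF.pairwise_disjoint]
    · rw [hQ1]
      norm_num
end

section
/- Let uK[Z] be a Stanley space of S_f, i.e. a free K[Z]-submodule of S_f generated by a monomial u of S_f, where Z ⊆ {x_1,…,x_n} ∪ {x_j^{-1} : j ∈ A} with {x_j, x_j^{-1}} ⊄ Z for all j ∈ A, and let m = |Z|. Then the Hilbert series of uK[Z] satisfies H_{uK[Z]}(t) = Q(t)/(1-t)^m for some polynomial Q(t) with Q(1) = 1. -/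
/-!
The exponent set of `u·K[Z]` is a product over the coordinates `i` of a point `{u i}` or a
half-line `u i ± ℕ`, according as neither, `x i` or `x i⁻¹` lies in `Z`. Since
`|a| = Σ |a i|`, the Hilbert series of such a product is the product of the one-variable
series. A point contributes `t^|u i|`. A half-line contributes `Q(t)/(1-t)` with `Q(1) = 1`:
it differs from `m + ℕ`, `m ≥ 0`, whose series is `t^m/(1-t)`, by finitely many points, and
each point adds a monomial to the series, hence a multiple of `1 - t` to the numerator.
-/

open PowerSeries

noncomputable def hilbSeriesInt (s : Set ℤ) : PowerSeries ℚ :=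
  mk fun k => ({w ∈ s | w.natAbs = k}.ncard : ℚ)

lemma finite_natAbs_eq_s13 (k : ℕ) : {w : ℤ | w.natAbs = k}.Finite := by
  simp only [Int.natAbs_eq_iff]
  exact (Set.toFinite {(k : ℤ), -(k : ℤ)}).subset fun w hw => hw

@[simp]
lemma hilbSeriesInt_empty : hilbSeriesInt ∅ = 0 := by
  ext k; simp [hilbSeriesInt]

lemma hilbSeriesInt_insert {a : ℤ} {s : Set ℤ} (ha : a ∉ s) :
    hilbSeriesInt (insert a s) = X ^ a.natAbs + hilbSeriesInt s := by
  ext k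
  have hfin : {w ∈ s | w.natAbs = k}.Finite := (finite_natAbs_eq_s13 k).subset fun w hw => hw.2
  simp only [hilbSeriesInt, coeff_mk, map_add, coeff_X_pow]
  by_cases hk : k = a.natAbs
  · have : {w ∈ insert a s | w.natAbs = k} = insert a {w ∈ s | w.natAbs = k} := by
      ext w; simp only [Set.mem_insert_iff, Set.mem_ofPred_eq]; aesop
    rw [this, Set.ncard_insert_of_notMem (fun h => ha h.1) hfin, if_pos hk]
    push_cast; ring
  · have : {w ∈ insert a s | w.natAbs = k} = {w ∈ s | w.natAbs = k} := by
      ext w; simp only [Set.mem_insert_iff, Set.mem_ofPred_eq]; aesop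
    rw [this, if_neg hk, zero_add]

lemma hilbSeriesInt_singleton (v : ℤ) : hilbSeriesInt {v} = X ^ v.natAbs := by
  simpa using hilbSeriesInt_insert (Set.notMem_empty v)

lemma hilbSeriesInt_neg (s : Set ℤ) : hilbSeriesInt (-s) = hilbSeriesInt s := by
  ext k
  simp only [hilbSeriesInt, coeff_mk]
  rw [← Set.ncard_neg]
  congr 2
  ext w; simp

lemma hilbSeriesInt_Ici_natCast (m : ℕ) :
    hilbSeriesInt (Set.Ici (m : ℤ)) = X ^ m * mk (1 : ℕ → ℚ) := by
  ext k
  rw [coeff_X_pow_mul', hilbSeriesInt, coeff_mk]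
  split_ifs with h
  · have : {w ∈ Set.Ici (m : ℤ) | w.natAbs = k} = {(k : ℤ)} := by
      ext w; simp only [Set.mem_Ici, Set.mem_ofPred_eq, Set.mem_singleton_iff]; omega
    rw [this]; simp
  · have : {w ∈ Set.Ici (m : ℤ) | w.natAbs = k} = ∅ := by
      ext w; simp only [Set.mem_Ici, Set.mem_ofPred_eq, Set.mem_empty_iff_false, iff_false]; omega
    rw [this]; simp

lemma exists_hilbSeriesInt_Ici_mul (v : ℤ) : ∃ Q : Polynomial ℚ,
    hilbSeriesInt (Set.Ici v) * (1 - X) = (Q : PowerSeries ℚ) ∧ Q.eval 1 = 1 := by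
  have nonneg (m : ℕ) : ∃ Q : Polynomial ℚ,
      hilbSeriesInt (Set.Ici (m : ℤ)) * (1 - X) = (Q : PowerSeries ℚ) ∧ Q.eval 1 = 1 :=
    ⟨Polynomial.X ^ m, by
      rw [hilbSeriesInt_Ici_natCast, mul_assoc, mk_one_mul_one_sub_eq_one]; simp, by simp⟩
  rcases le_or_gt 0 v with hv | hv
  · lift v to ℕ using hv
    exact nonneg v
  replace hv := hv.le
  induction v, hv using Int.leInductionDown with
  | base => exact nonneg 0
  | pred w _ ih =>
    obtain ⟨Q, hQ, hQ1⟩ := ih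
    have : Set.Ici (w - 1) = insert (w - 1) (Set.Ici w) := by
      ext; simp only [Set.mem_Ici, Set.mem_insert_iff]; omega
    refine ⟨Polynomial.X ^ (w - 1).natAbs * (1 - Polynomial.X) + Q, ?_, by simp [hQ1]⟩
    rw [this, hilbSeriesInt_insert (by simp), add_mul, hQ]
    simp

lemma hilbSeries_pi {n : ℕ} (S : Fin n → Set ℤ) :
    hilbSeries (Set.univ.pi S) = ∏ i, hilbSeriesInt (S i) := by
  classical
  ext d
  let F (i : Fin n) (k : ℕ) : Finset ℤ := {w ∈ (finite_natAbs_eq_s13 k).toFinset | w ∈ S i}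
  have hF (i : Fin n) (k : ℕ) : {w ∈ S i | w.natAbs = k} = F i k := by
    ext w; simp [F, and_comm]
  have hfibres : {a ∈ Set.univ.pi S | degAbs a = d} =
      ↑((Finset.finsuppAntidiag Finset.univ d).biUnion
        fun l => Fintype.piFinset fun i => F i (l i)) := by
    ext a
    simp only [Set.mem_ofPred_eq, Set.mem_pi, Set.mem_univ, true_implies, Finset.coe_biUnion,
      Finset.mem_coe, Finset.mem_finsuppAntidiag, Fintype.mem_piFinset, Set.mem_iUnion,
      exists_prop, F, Finset.mem_filter, Set.Finite.mem_toFinset]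
    constructor
    · rintro ⟨ha, rfl⟩
      exact ⟨Finsupp.equivFunOnFinite.symm fun i => (a i).natAbs, ⟨rfl, by simp⟩,
        fun i => ⟨rfl, ha i⟩⟩
    · rintro ⟨l, ⟨rfl, -⟩, ha⟩
      exact ⟨fun i => (ha i).2, Finset.sum_congr rfl fun i _ => (ha i).1⟩
  have hdisj : Set.PairwiseDisjoint ↑(Finset.univ.finsuppAntidiag d : Finset (Fin n →₀ ℕ))
      fun l : Fin n →₀ ℕ => Fintype.piFinset fun i => F i (l i) := by
    intro l _ l' _ hll'
    refine Finset.disjoint_left.mpr fun a ha ha' => hll' (Finsupp.ext fun i => ?_)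
    simp only [Fintype.mem_piFinset, F, Finset.mem_filter, Set.Finite.mem_toFinset] at ha ha'
    exact (ha i).1.symm.trans (ha' i).1
  simp only [hilbSeries, hilbSeriesInt, coeff_mk, coeff_prod, hF, Set.ncard_coe_finset, hfibres,
    Finset.card_biUnion hdisj, Fintype.card_piFinset]
  push_cast
  rfl

def stanleyCoord (v : ℤ) (up down : Prop) : Set ℤ :=
  {w | (up → v ≤ w) ∧ (down → w ≤ v) ∧ (¬up → ¬down → w = v)}

lemma stanleySet_eq_pi {n : ℕ} (u : Fin n → ℤ) (Z : Finset (Fin n × Bool)) :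
    stanleySet u Z = Set.univ.pi fun i => stanleyCoord (u i) ((i, true) ∈ Z) ((i, false) ∈ Z) := by
  ext a; simp [stanleySet, stanleyCoord]

lemma exists_hilbSeriesInt_stanleyCoord_mul (v : ℤ) {up down : Prop} [Decidable up]
    [Decidable down] (h : ¬(up ∧ down)) : ∃ Q : Polynomial ℚ,
      hilbSeriesInt (stanleyCoord v up down) * (1 - X) ^ ((if up then 1 else 0) + if down then 1 else 0)
        = (Q : PowerSeries ℚ) ∧ Q.eval 1 = 1 := by
  by_cases hup : up
  · have hdown : ¬down := fun hd => h ⟨hup, hd⟩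
    have : stanleyCoord v up down = Set.Ici v := by
      ext w; simp [stanleyCoord, hup, hdown]
    rw [this]
    simpa [hup, hdown] using exists_hilbSeriesInt_Ici_mul v
  by_cases hdown : down
  · have : stanleyCoord v up down = -Set.Ici (-v) := by
      ext w; simp [stanleyCoord, hup, hdown]
    rw [this, hilbSeriesInt_neg]
    simpa [hup, hdown] using exists_hilbSeriesInt_Ici_mul (-v)
  · have : stanleyCoord v up down = {v} := by
      ext w; simp [stanleyCoord, hup, hdown]
    rw [this, hilbSeriesInt_singleton]
    exact ⟨Polynomial.X ^ v.natAbs, by simp [hup, hdown], by simp⟩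

lemma Finset.card_eq_sum_ite_mem_prod_bool {ι : Type*} [Fintype ι] [DecidableEq ι]
    (Z : Finset (ι × Bool)) :
    Z.card = ∑ i, ((if (i, true) ∈ Z then 1 else 0) + if (i, false) ∈ Z then 1 else 0) := by
  calc Z.card = ∑ p : ι × Bool, if p ∈ Z then 1 else 0 := by simp
    _ = _ := by simp only [Fintype.sum_prod_type, Fintype.sum_bool]

theorem hilbert_series_stanley_space_general {n : ℕ} (A : Finset (Fin n))
    (u : Fin n → ℤ)
    (Z : Finset (Fin n × Bool)) (hZ : ZOk A Z) :
    ∃ Q : Polynomial ℚ,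
      hilbSeries (stanleySet u Z) * (1 - PowerSeries.X) ^ Z.card = (Q : PowerSeries ℚ) ∧
      Q.eval 1 = 1 := by
  classical
  choose Q hQ hQ1 using fun i => exists_hilbSeriesInt_stanleyCoord_mul (u i) (hZ.2 i)
  refine ⟨∏ i, Q i, ?_, by simp [Polynomial.eval_prod, hQ1]⟩
  rw [stanleySet_eq_pi, hilbSeries_pi, Finset.card_eq_sum_ite_mem_prod_bool,
    ← Finset.prod_pow_eq_pow_sum, ← Finset.prod_mul_distrib]
  simp only [hQ]
  exact (map_prod Polynomial.coeToPowerSeries.ringHom Q _).symm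

/-- For a Stanley space `u·K[Z]` of `S_f` with `m = |Z|`, the Hilbert series satisfies
`H_{uK[Z]}(t) = Q(t)/(1-t)^m` for a polynomial `Q` with `Q(1) = 1`. -/
theorem hilbert_series_stanley_space {n : ℕ} (A : Finset (Fin n))
    (u : Fin n → ℤ) (hu : u ∈ SfMon A)
    (Z : Finset (Fin n × Bool)) (hZ : ZOk A Z) :
    ∃ Q : Polynomial ℚ,
      hilbSeries (stanleySet u Z) * (1 - PowerSeries.X) ^ Z.card = (Q : PowerSeries ℚ) ∧
      Q.eval 1 = 1 :=
  hilbert_series_stanley_space_general A u Z hZ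
end

section
/- In every Stanley decomposition of S_f, the number of Stanley spaces of maximal dimension (namely dimension n) equals 2^{|A|}. In particular, every Stanley decomposition of S_f has at least 2^{|A|} summands. -/
/-- In every Stanley decomposition of `S_f`, the number of Stanley spaces of maximal
dimension (namely dimension `n`) equals `2^{|A|}`; in particular every Stanley
decomposition of `S_f` has at least `2^{|A|}` summands. -/
theorem count_maximal_stanley_spaces {n : ℕ} (A : Finset (Fin n))
    {r : ℕ} (u : Fin r → Fin n → ℤ) (Z : Fin r → Finset (Fin n × Bool))
    (hD : IsStanleyDecompOn A (SfMon A) u Z) :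
    (Finset.univ.filter fun i : Fin r => (Z i).card = n).card = 2 ^ A.card ∧
    2 ^ A.card ≤ r := by
  classical
  obtain ⟨-, hZok, hdisj, hcover⟩ := hD
  set φ : Fin r → Finset (Fin n) :=
    fun i => Finset.univ.filter (fun k => (k, false) ∈ Z i) with hφ
  -- full-dimensional Stanley spaces cover every coordinate
  have hfull : ∀ i : Fin r, (Z i).card = n →
      ∀ k : Fin n, (k, true) ∈ Z i ∨ (k, false) ∈ Z i := by
    intro i hc k
    have hinj : Set.InjOn Prod.fst (Z i : Set (Fin n × Bool)) := by
      rintro ⟨p1, pb⟩ hp ⟨q1, qb⟩ hq h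
      simp only at h
      subst h
      cases pb <;> cases qb
      · rfl
      · exact absurd ⟨hq, hp⟩ ((hZok i).2 p1)
      · exact absurd ⟨hp, hq⟩ ((hZok i).2 p1)
      · rfl
    have himg : (Z i).image Prod.fst = Finset.univ := by
      apply Finset.eq_univ_of_card
      rw [Finset.card_image_of_injOn hinj, hc]
      exact (Fintype.card_fin n).symm
    have hk : k ∈ (Z i).image Prod.fst := by rw [himg]; exact Finset.mem_univ k
    obtain ⟨⟨k', b⟩, hp, hpk⟩ := Finset.mem_image.mp hk
    simp only at hpk
    subst hpk
    cases b
    · exact Or.inr hp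
    · exact Or.inl hp
  -- injectivity of the sign-pattern map on full-dimensional spaces
  have hinjF : ∀ i₁, (Z i₁).card = n → ∀ i₂, (Z i₂).card = n → φ i₁ = φ i₂ → i₁ = i₂ := by
    intro i₁ h₁ i₂ h₂ hφeq
    by_contra hne
    set a : Fin n → ℤ := fun k =>
      if (k, false) ∈ Z i₁ then min (u i₁ k) (u i₂ k) else max (u i₁ k) (u i₂ k) with ha
    have hmemφ : ∀ k, (k, false) ∈ Z i₁ ↔ (k, false) ∈ Z i₂ := by
      intro k
      have := Finset.ext_iff.mp hφeq k
      simpa [hφ] using this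
    have ha1 : a ∈ stanleySet (u i₁) (Z i₁) := by
      intro k
      refine ⟨?_, ?_, ?_⟩
      · intro ht
        have hf : (k, false) ∉ Z i₁ := fun hf => (hZok i₁).2 k ⟨ht, hf⟩
        simp [ha, hf, le_max_left]
      · intro hf; simp [ha, hf, min_le_left]
      · intro ht hf
        rcases hfull i₁ h₁ k with h | h
        · exact absurd h ht
        · exact absurd h hf
    have ha2 : a ∈ stanleySet (u i₂) (Z i₂) := by
      intro k
      refine ⟨?_, ?_, ?_⟩
      · intro ht
        have hf : (k, false) ∉ Z i₂ := fun hf => (hZok i₂).2 k ⟨ht, hf⟩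
        have hf1 : (k, false) ∉ Z i₁ := fun h => hf ((hmemφ k).mp h)
        simp [ha, hf1, le_max_right]
      · intro hf
        have hf1 : (k, false) ∈ Z i₁ := (hmemφ k).mpr hf
        simp [ha, hf1, min_le_right]
      · intro ht hf
        rcases hfull i₂ h₂ k with h | h
        · exact absurd h ht
        · exact absurd h hf
    exact Set.disjoint_left.mp (hdisj hne) ha1 ha2
  -- surjectivity of the sign-pattern map onto subsets of A
  have hsurj : ∀ B ∈ A.powerset, ∃ i, (Z i).card = n ∧ φ i = B := by
    intro B hB
    rw [Finset.mem_powerset] at hB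
    set t : ℤ := ((Finset.univ.sup fun p : Fin r × Fin n => (u p.1 p.2).natAbs : ℕ) : ℤ) + 1
      with htdef
    have hT : ∀ i k, |u i k| < t := by
      intro i k
      have h1 : (u i k).natAbs ≤ Finset.univ.sup fun p : Fin r × Fin n => (u p.1 p.2).natAbs :=
        Finset.le_sup (f := fun p : Fin r × Fin n => (u p.1 p.2).natAbs) (Finset.mem_univ (i, k))
      have h2 : ((u i k).natAbs : ℤ) ≤
          ((Finset.univ.sup fun p : Fin r × Fin n => (u p.1 p.2).natAbs : ℕ) : ℤ) :=
        Int.ofNat_le.mpr h1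
      rw [Int.abs_eq_natAbs]
      omega
    have ht0 : 0 < t := by
      have : (0 : ℤ) ≤
          ((Finset.univ.sup fun p : Fin r × Fin n => (u p.1 p.2).natAbs : ℕ) : ℤ) :=
        Int.natCast_nonneg _
      omega
    set a : Fin n → ℤ := fun k => if k ∈ B then -t else t with hadef
    have haS : a ∈ SfMon A := by
      intro k hk
      have hkB : k ∉ B := fun h => hk (hB h)
      simp only [hadef, if_neg hkB]
      omega
    have hmem : a ∈ ⋃ i, stanleySet (u i) (Z i) := hcover ▸ haS
    obtain ⟨_, ⟨i, rfl⟩, hi⟩ := hmem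
    have hkey : ∀ k : Fin n, ((k, false) ∈ Z i ↔ k ∈ B) := by
      intro k
      obtain ⟨hk1, hk2, hk3⟩ := hi k
      have habs := hT i k
      rw [abs_lt] at habs
      by_cases hkB : k ∈ B
      · have hak : a k = -t := by simp [hadef, hkB]
        simp only [iff_true, hkB]
        have hnt : (k, true) ∉ Z i := by
          intro h
          have := hk1 h
          omega
        by_contra hf
        have := hk3 hnt hf
        omega
      · simp only [hkB, iff_false]
        intro hf
        have := hk2 hf
        have hak : a k = t := by simp [hadef, hkB]
        omega
    have hkeyT : ∀ k : Fin n, k ∉ B → (k, true) ∈ Z i := by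
      intro k hkB
      obtain ⟨hk1, hk2, hk3⟩ := hi k
      have habs := hT i k
      rw [abs_lt] at habs
      have hak : a k = t := by simp [hadef, hkB]
      by_contra ht
      have hf : (k, false) ∉ Z i := fun h => hkB ((hkey k).mp h)
      have := hk3 ht hf
      omega
    have hZeq : Z i = Finset.univ.image (fun k : Fin n => (k, decide (k ∉ B))) := by
      ext ⟨k, b⟩
      simp only [Finset.mem_image, Finset.mem_univ, true_and]
      constructor
      · intro hkb
        refine ⟨k, ?_⟩
        cases b
        · have hkB : k ∈ B := (hkey k).mp hkb
          simp [hkB]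
        · have hkB : k ∉ B := by
            intro h
            exact (hZok i).2 k ⟨hkb, (hkey k).mpr h⟩
          simp [hkB]
      · rintro ⟨k', hk'⟩
        rw [Prod.mk.injEq] at hk'
        obtain ⟨rfl, rfl⟩ := hk'
        by_cases hkB : k' ∈ B
        · simpa [hkB] using (hkey k').mpr hkB
        · simpa [hkB] using hkeyT k' hkB
    have hcard : (Z i).card = n := by
      rw [hZeq, Finset.card_image_of_injective _ (fun k₁ k₂ h => congrArg Prod.fst h),
        Finset.card_univ, Fintype.card_fin]
    refine ⟨i, hcard, ?_⟩
    ext k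
    simp only [hφ, Finset.mem_filter, Finset.mem_univ, true_and]
    exact hkey k
  have hcardeq : (Finset.univ.filter fun i : Fin r => (Z i).card = n).card = 2 ^ A.card := by
    rw [← Finset.card_powerset]
    apply Finset.card_bij (fun i _ => φ i)
    · intro i hi
      simp only [Finset.mem_powerset]
      intro k hk
      simp only [hφ, Finset.mem_filter, Finset.mem_univ, true_and] at hk
      exact (hZok i).1 k hk
    · intro i₁ h₁ i₂ h₂ h
      simp only [Finset.mem_filter] at h₁ h₂
      exact hinjF i₁ h₁.2 i₂ h₂.2 h
    · intro B hB
      obtain ⟨i, hc, hφi⟩ := hsurj B hB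
      exact ⟨i, Finset.mem_filter.mpr ⟨Finset.mem_univ i, hc⟩, hφi⟩
  refine ⟨hcardeq, ?_⟩
  calc 2 ^ A.card = _ := hcardeq.symm
    _ ≤ (Finset.univ : Finset (Fin r)).card := Finset.card_filter_le _ _
    _ = r := by simp
end
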